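/- Let n ≥ 2 and let A be an n×n real Higham² matrix with P = D = I, i.e. A = [[L̂, 0],[−𝟏ᵀ, 1]]·[[Û, u],[0, 2^{n−1}]] where L̂ is the (n−1)×(n−1) lower unitriangular matrix with all strictly lower entries −1, Û is an invertible (n−1)×(n−1) upper triangular matrix, u = (1, 2, 4, …, 2^{n−2})ᵀ, and 𝟏 is the all-ones vector. Write A = LU for the induced LU factorization of A. Then for every index k with 1 ≤ k ≤ n and every ℓ with 1 ≤ ℓ ≤ n−1, the ℓ₂ condition number κ₂(A) = ‖A‖₂·‖A⁻¹‖₂ (operator norms induced by the Euclidean norm) satisfies κ₂(A) ≥ √n · |(U⁻¹)_{k,n−ℓ}| / √(ℓ+1). -/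

import Mathlib

open Matrix

/-- `M` is lower triangular with all diagonal entries equal to `1`. -/
def IsLowerUnitri {k : ℕ} (M : Matrix (Fin k) (Fin k) ℝ) : Prop :=
  (∀ i, M i i = 1) ∧ ∀ i j : Fin k, i < j → M i j = 0

/-- `M` is upper triangular. -/
def IsUpperTri {k : ℕ} (M : Matrix (Fin k) (Fin k) ℝ) : Prop :=
  ∀ i j : Fin k, j < i → M i j = 0

/-- The `m × m` lower unitriangular matrix with all strictly lower entries `-1`. -/
def highamLhat (m : ℕ) : Matrix (Fin m) (Fin m) ℝ :=
  Matrix.of fun i j => if j < i then -1 else if i = j then 1 else 0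

/-- The Higham² matrix with `P = D = I` determined by the invertible upper triangular
matrix `Û`, i.e. `A = [[L̂, 0],[-𝟏ᵀ, 1]] * [[Û, u],[0, 2^(n-1)]]` with
`u = (1, 2, …, 2^(n-2))ᵀ`, viewed as an `n × n = (m+1) × (m+1)` matrix. -/
noncomputable def highamA {m : ℕ} (Uhat : Matrix (Fin m) (Fin m) ℝ) :
    Matrix (Fin (m + 1)) (Fin (m + 1)) ℝ :=
  Matrix.reindex finSumFinEquiv finSumFinEquiv
    (Matrix.fromBlocks (highamLhat m) 0 (Matrix.of fun (_ : Fin 1) (_ : Fin m) => (-1 : ℝ))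
        (Matrix.of fun (_ : Fin 1) (_ : Fin 1) => (1 : ℝ)) *
      Matrix.fromBlocks Uhat (Matrix.of fun (k : Fin m) (_ : Fin 1) => (2 : ℝ) ^ (k : ℕ)) 0
        (Matrix.of fun (_ : Fin 1) (_ : Fin 1) => (2 : ℝ) ^ m))

/-- The operator norm of a square real matrix induced by the Euclidean vector norm. -/
noncomputable def opNorm2 {k : ℕ} (M : Matrix (Fin k) (Fin k) ℝ) : ℝ :=
  ‖Matrix.toEuclideanCLM (𝕜 := ℝ) M‖

lemma aux_coord_le {n : ℕ} (v : Fin n → ℝ) (k : Fin n) :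
    |v k| ≤ ‖(WithLp.equiv 2 (Fin n → ℝ)).symm v‖ := by
  rw [EuclideanSpace.norm_eq]
  rw [show |v k| = Real.sqrt ((v k)^2) by rw [Real.sqrt_sq_eq_abs]]
  apply Real.sqrt_le_sqrt
  have h := Finset.single_le_sum
    (f := fun i => ‖(WithLp.equiv 2 (Fin n → ℝ)).symm v i‖^2)
    (fun i _ => sq_nonneg _) (Finset.mem_univ k)
  simpa [Real.norm_eq_abs, sq_abs] using h

lemma aux_mulVec_coord_le {n : ℕ} (M : Matrix (Fin n) (Fin n) ℝ) (v : Fin n → ℝ) (k : Fin n) :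
    |M.mulVec v k| ≤ opNorm2 M * ‖(WithLp.equiv 2 (Fin n → ℝ)).symm v‖ := by
  have h1 := aux_coord_le (M.mulVec v) k
  have h2 : (WithLp.equiv 2 (Fin n → ℝ)).symm (M.mulVec v)
      = Matrix.toEuclideanCLM (𝕜 := ℝ) M ((WithLp.equiv 2 (Fin n → ℝ)).symm v) := by
    rw [WithLp.equiv_symm_apply, Matrix.toEuclideanCLM_toLp]
  rw [h2] at h1
  exact h1.trans (ContinuousLinearMap.le_opNorm _ _)

theorem stmt_14 {m : ℕ} (hm : 1 ≤ m)
    (Uhat : Matrix (Fin m) (Fin m) ℝ) (hUhat : IsUpperTri Uhat) (hUdet : IsUnit Uhat.det)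
    (U : Matrix (Fin (m + 1)) (Fin (m + 1)) ℝ)
    (hU : U = Matrix.reindex finSumFinEquiv finSumFinEquiv
        (Matrix.fromBlocks Uhat (Matrix.of fun (k : Fin m) (_ : Fin 1) => (2 : ℝ) ^ (k : ℕ)) 0
          (Matrix.of fun (_ : Fin 1) (_ : Fin 1) => (2 : ℝ) ^ m)))
    (k : Fin (m + 1)) (l : ℕ) (hl1 : 1 ≤ l) (hlm : l ≤ m) :
    Real.sqrt (m + 1) * |U⁻¹ k ⟨m - l, by omega⟩| / Real.sqrt (l + 1)
      ≤ opNorm2 (highamA Uhat) * opNorm2 (highamA Uhat)⁻¹ := by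
  set A := highamA Uhat with hAdef
  set Lm : Matrix (Fin (m+1)) (Fin (m+1)) ℝ :=
    Matrix.reindex finSumFinEquiv finSumFinEquiv
      (Matrix.fromBlocks (highamLhat m) 0 (Matrix.of fun (_ : Fin 1) (_ : Fin m) => (-1 : ℝ))
        (Matrix.of fun (_ : Fin 1) (_ : Fin 1) => (1 : ℝ))) with hLm
  -- A = Lm * U
  have hA : A = Lm * U := by
    rw [hAdef, highamA, hU, hLm]
    simp only [Matrix.reindex_apply]
    rw [Matrix.submatrix_mul_equiv _ _ _ finSumFinEquiv.symm _]
  -- entries of Lm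
  have hLment : ∀ i j : Fin (m+1), Lm i j =
      if (j:ℕ) < (i:ℕ) then -1 else if i = j then 1 else 0 := by
    intro i j
    obtain ⟨si, rfl⟩ : ∃ s, finSumFinEquiv s = i := ⟨finSumFinEquiv.symm i, by simp⟩
    obtain ⟨sj, rfl⟩ : ∃ s, finSumFinEquiv s = j := ⟨finSumFinEquiv.symm j, by simp⟩
    rw [hLm]
    simp only [Matrix.reindex_apply, Matrix.submatrix_apply, Equiv.symm_apply_apply]
    rcases si with i' | i' <;> rcases sj with j' | j'
    · rw [Matrix.fromBlocks_apply₁₁]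
      have hc1 : ((finSumFinEquiv ((Sum.inl j' : Fin m ⊕ Fin 1)) : Fin (m+1)) : ℕ) = (j' : ℕ) := by simp
      have hc2 : ((finSumFinEquiv ((Sum.inl i' : Fin m ⊕ Fin 1)) : Fin (m+1)) : ℕ) = (i' : ℕ) := by simp
      rw [hc1, hc2]
      simp only [highamLhat, Matrix.of_apply]
      by_cases h1 : (j':ℕ) < (i':ℕ)
      · rw [if_pos h1, if_pos (show j' < i' from h1)]
      · rw [if_neg h1, if_neg (show ¬ j' < i' from h1)]
        by_cases h2 : i' = j'
        · rw [if_pos h2, if_pos (by rw [h2])]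
        · rw [if_neg h2, if_neg (fun he => h2 (Sum.inl.inj (finSumFinEquiv.injective he)))]
    · rw [Matrix.fromBlocks_apply₁₂]
      have h1 : ¬ ((finSumFinEquiv ((Sum.inr j' : Fin m ⊕ Fin 1)) : ℕ) < (finSumFinEquiv ((Sum.inl i' : Fin m ⊕ Fin 1)) : ℕ)) := by
        simp <;> omega
      have h2 : finSumFinEquiv ((Sum.inl i' : Fin m ⊕ Fin 1)) ≠ finSumFinEquiv ((Sum.inr j' : Fin m ⊕ Fin 1)) := by
        simp [Fin.ext_iff] <;> omega
      rw [if_neg h1, if_neg h2]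
      simp
    · rw [Matrix.fromBlocks_apply₂₁]
      have h1 : (finSumFinEquiv ((Sum.inl j' : Fin m ⊕ Fin 1)) : ℕ) < (finSumFinEquiv ((Sum.inr i' : Fin m ⊕ Fin 1)) : ℕ) := by
        simp <;> omega
      rw [if_pos h1]
      rfl
    · rw [Matrix.fromBlocks_apply₂₂]
      have h1 : ¬ ((finSumFinEquiv ((Sum.inr j' : Fin m ⊕ Fin 1)) : ℕ) < (finSumFinEquiv ((Sum.inr i' : Fin m ⊕ Fin 1)) : ℕ)) := by
        simp <;> omega
      have h2 : finSumFinEquiv ((Sum.inr i' : Fin m ⊕ Fin 1)) = finSumFinEquiv ((Sum.inr j' : Fin m ⊕ Fin 1)) := by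
        simp [Fin.ext_iff] <;> omega
      rw [if_neg h1, if_pos h2]
      rfl
  -- entries of U in the last column
  have hUlast : ∀ i : Fin (m+1), U i (Fin.last m) = 2 ^ (i : ℕ) := by
    intro i
    obtain ⟨si, rfl⟩ : ∃ s, finSumFinEquiv s = i := ⟨finSumFinEquiv.symm i, by simp⟩
    rw [hU]
    simp only [Matrix.reindex_apply, Matrix.submatrix_apply, Equiv.symm_apply_apply,
      finSumFinEquiv_symm_last]
    rcases si with i' | i'
    · rw [Matrix.fromBlocks_apply₁₂]; simp
    · rw [Matrix.fromBlocks_apply₂₂]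
      simp [Fin.ext_iff]
  -- Lm is invertible
  have hLdet : IsUnit Lm.det := by
    rw [hLm]
    simp only [Matrix.reindex_apply]
    rw [Matrix.det_submatrix_equiv_self, Matrix.det_fromBlocks_zero₁₂]
    have h1 : (highamLhat m).det = 1 := by
      rw [Matrix.det_of_lowerTriangular]
      · simp [highamLhat]
      · intro i j hij
        have hij' : i < j := hij
        simp only [highamLhat, Matrix.of_apply]
        rw [if_neg (by exact fun h => absurd hij' (not_lt.mpr h.le)),
          if_neg (ne_of_lt hij')]
    rw [h1]
    simp
  -- U⁻¹ = A⁻¹ * Lm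
  have hUinv : U⁻¹ = A⁻¹ * Lm := by
    rw [hA, Matrix.mul_inv_rev, Matrix.mul_assoc, Matrix.nonsing_inv_mul Lm hLdet,
      Matrix.mul_one]
  set j : Fin (m+1) := ⟨m - l, by omega⟩ with hjdef
  set x : Fin (m+1) → ℝ := fun i => Lm i j with hx
  -- norm of the j-th column of Lm
  have hxnorm : ‖(WithLp.equiv 2 (Fin (m+1) → ℝ)).symm x‖ = Real.sqrt (l + 1) := by
    rw [EuclideanSpace.norm_eq]
    congr 1
    have hterm : ∀ i : Fin (m+1), ‖(WithLp.equiv 2 (Fin (m+1) → ℝ)).symm x i‖^2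
        = if m - l ≤ (i:ℕ) then 1 else 0 := by
      intro i
      have hxi : x i = if (j:ℕ) < (i:ℕ) then -1 else if i = j then 1 else 0 := hLment i j
      have hjv : (j:ℕ) = m - l := rfl
      simp only [WithLp.equiv_symm_apply, PiLp.toLp_apply, Real.norm_eq_abs, sq_abs]
      rw [hxi]
      by_cases h : m - l ≤ (i:ℕ)
      · rcases lt_or_eq_of_le h with h' | h'
        · have hlt : (j:ℕ) < (i:ℕ) := by omega
          rw [if_pos hlt, if_pos h]
          norm_num
        · have heq : i = j := Fin.ext (by omega)
          have hnl : ¬ ((j:ℕ) < (i:ℕ)) := by omega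
          rw [if_neg hnl, if_pos heq, if_pos h]
          norm_num
      · have h1 : ¬ ((j:ℕ) < (i:ℕ)) := by omega
        have h2 : i ≠ j := by
          intro he
          exact h (by rw [he])
        rw [if_neg h1, if_neg h2, if_neg h]
        norm_num
    rw [Finset.sum_congr rfl (fun i _ => hterm i)]
    rw [show (∑ i : Fin (m+1), if m - l ≤ (i:ℕ) then (1:ℝ) else 0)
        = ∑ i ∈ Finset.range (m+1), (if m - l ≤ i then (1:ℝ) else 0) from
      Fin.sum_univ_eq_sum_range (fun i => if m - l ≤ i then (1:ℝ) else 0) (m+1)]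
    rw [Finset.sum_boole]
    have hfilt : Finset.filter (fun i => m - l ≤ i) (Finset.range (m+1))
        = Finset.Ico (m - l) (m+1) := by
      ext t
      simp [Nat.lt_succ_iff]
      omega
    rw [hfilt, Nat.card_Ico]
    have : m + 1 - (m - l) = l + 1 := by omega
    rw [this]
    push_cast
    ring
  -- entry bound
  have hkj : |U⁻¹ k j| ≤ opNorm2 A⁻¹ * Real.sqrt (l + 1) := by
    have hentry : U⁻¹ k j = (A⁻¹).mulVec x k := by
      rw [hUinv, Matrix.mul_apply]
      rfl
    rw [hentry, ← hxnorm]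
    exact aux_mulVec_coord_le _ _ _
  -- lower bound on the norm of A
  have hones : A.mulVec (Pi.single (Fin.last m) 1) = fun _ => 1 := by
    funext i
    simp only [Matrix.mulVec_single_one, Matrix.col_apply]
    have : A i (Fin.last m) = ∑ t : Fin (m+1), Lm i t * U t (Fin.last m) := by
      rw [hA, Matrix.mul_apply]
    rw [this]
    have hsummand : ∀ t : Fin (m+1), Lm i t * U t (Fin.last m)
        = (if (t:ℕ) < (i:ℕ) then -1 else if (i:ℕ) = (t:ℕ) then 1 else 0) * 2 ^ (t:ℕ) := by
      intro t
      rw [hLment i t, hUlast t]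
      congr 1
      simp [Fin.ext_iff]
    rw [Finset.sum_congr rfl (fun t _ => hsummand t)]
    rw [Fin.sum_univ_eq_sum_range
      (fun t => (if t < (i:ℕ) then (-1:ℝ) else if (i:ℕ) = t then 1 else 0) * 2 ^ t) (m+1)]
    have hsub : ∑ t ∈ Finset.range (m+1),
        ((if t < (i:ℕ) then (-1:ℝ) else if (i:ℕ) = t then 1 else 0) * 2 ^ t)
        = ∑ t ∈ Finset.range ((i:ℕ)+1),
        ((if t < (i:ℕ) then (-1:ℝ) else if (i:ℕ) = t then 1 else 0) * 2 ^ t) := by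
      symm
      apply Finset.sum_subset
      · apply Finset.range_subset_range.mpr
        omega
      · intro t ht hnt
        simp only [Finset.mem_range] at ht hnt
        rw [if_neg (by omega), if_neg (by omega), zero_mul]
    rw [hsub, Finset.sum_range_succ, if_neg (lt_irrefl _), if_pos rfl, one_mul]
    have hgeom : ∑ t ∈ Finset.range (i:ℕ),
        ((if t < (i:ℕ) then (-1:ℝ) else if (i:ℕ) = t then 1 else 0) * 2 ^ t)
        = -(2 ^ (i:ℕ) - 1) := by
      have : ∀ t ∈ Finset.range (i:ℕ),
          ((if t < (i:ℕ) then (-1:ℝ) else if (i:ℕ) = t then 1 else 0) * 2 ^ t)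
          = -(2 ^ t) := by
        intro t ht
        rw [if_pos (Finset.mem_range.mp ht)]
        ring
      rw [Finset.sum_congr rfl this, Finset.sum_neg_distrib]
      congr 1
      rw [geom_sum_eq (by norm_num : (2:ℝ) ≠ 1)]
      norm_num
    rw [hgeom]
    ring
  have hAop : Real.sqrt (m+1) ≤ opNorm2 A := by
    have h := ContinuousLinearMap.le_opNorm (Matrix.toEuclideanCLM (𝕜 := ℝ) A)
      ((WithLp.equiv 2 (Fin (m+1) → ℝ)).symm (Pi.single (Fin.last m) 1))
    rw [WithLp.equiv_symm_apply, Matrix.toEuclideanCLM_toLp] at h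
    rw [EuclideanSpace.toLp_single, EuclideanSpace.norm_single] at h
    rw [hones] at h
    have hones_norm : ‖(WithLp.equiv 2 (Fin (m+1) → ℝ)).symm (fun _ : Fin (m+1) => (1:ℝ))‖
        = Real.sqrt (m+1) := by
      rw [EuclideanSpace.norm_eq]
      congr 1
      simp [Real.norm_eq_abs]
    rw [WithLp.equiv_symm_apply] at hones_norm
    rw [hones_norm] at h
    simpa [opNorm2] using h
  -- conclusion
  have hpos : (0:ℝ) < Real.sqrt (l + 1) := Real.sqrt_pos.mpr (by positivity)
  rw [div_le_iff₀ hpos]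
  calc Real.sqrt (m+1) * |U⁻¹ k j|
      ≤ opNorm2 A * (opNorm2 A⁻¹ * Real.sqrt (l + 1)) := by
        apply mul_le_mul hAop hkj (abs_nonneg _) (le_trans (Real.sqrt_nonneg _) hAop)
    _ = opNorm2 A * opNorm2 A⁻¹ * Real.sqrt (l + 1) := by ring
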